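/- Let P : C^op → InfSL be an elementary existential doctrine with weak full comprehensions such that for all objects A, B and all α ∈ P(A×B) with ⊤_A ≤ ∃_{pr1}(α) there exists w : A → B with ⊤_A ≤ P_{⟨id_A,w⟩}(α). Then the canonical functor L : Q_P → E_P from the elementary quotient completion to the subcategory of the exact completion on P-equivalence relations is full. -/

import Mathlib

open CategoryTheory CategoryTheory.Limits

universe u v w

/-- Layer 0: an indexed family of inf-semilattices over a category. -/
structure DocL0 (C : Type u) [Category.{v} C] where
  obj : C → Type w
  semi : ∀ A : C, SemilatticeInf (obj A)

attribute [instance] DocL0.semi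

/-- Layer 1: fibrewise top elements. -/
structure DocL1 (C : Type u) [Category.{v} C] extends DocL0.{u, v, w} C where
  otop : ∀ A : C, OrderTop (obj A)

attribute [instance] DocL1.otop

/-- A doctrine: an indexed inf-semilattice `P : Cᵒᵖ → InfSL`. -/
structure Doctrine (C : Type u) [Category.{v} C] extends DocL1.{u, v, w} C where
  map : ∀ {A B : C}, (A ⟶ B) → obj B → obj A
  map_id : ∀ (A : C) (x : obj A), map (𝟙 A) x = x
  map_comp : ∀ {A B D : C} (f : A ⟶ B) (g : B ⟶ D) (x : obj D),
    map (f ≫ g) x = map f (map g x)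
  map_mono : ∀ {A B : C} (f : A ⟶ B), Monotone (map f)
  map_inf : ∀ {A B : C} (f : A ⟶ B) (x y : obj B),
    map f (x ⊓ y) = map f x ⊓ map f y
  map_top : ∀ {A B : C} (f : A ⟶ B), map f (⊤ : obj B) = (⊤ : obj A)

/-- An elementary existential doctrine. -/
structure EED (C : Type u) [Category.{v} C] [HasBinaryProducts C] extends
    Doctrine.{u, v, w} C where
  delta : ∀ A : C, obj (A ⨯ A)
  elem_i : ∀ {A : C} (α : obj A) (β : obj (A ⨯ A)),
    map prod.fst α ⊓ delta A ≤ β ↔ α ≤ map (diag A) β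
  elem_ii : ∀ {X A : C} (α : obj (X ⨯ A)) (β : obj ((X ⨯ A) ⨯ A)),
    map prod.fst α ⊓ map (prod.lift (prod.fst ≫ prod.snd) prod.snd) (delta A) ≤ β ↔
      α ≤ map (prod.lift (𝟙 (X ⨯ A)) prod.snd) β
  ex : ∀ {A B : C}, (A ⟶ B) → obj A → obj B
  ex_adj : ∀ {A B : C} (f : A ⟶ B) (α : obj A) (β : obj B),
    ex f α ≤ β ↔ α ≤ map f β
  frobenius : ∀ {A B : C} (f : A ⟶ B) (α : obj B) (β : obj A),
    ex f (map f α ⊓ β) = α ⊓ ex f β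
  beck_chevalley : ∀ {A A' B : C} (f : A' ⟶ A) (β : obj (A ⨯ B)),
    ex prod.fst (map (prod.map f (𝟙 B)) β) = map f (ex prod.fst β)

namespace EED

variable {C : Type u} [Category.{v} C] [HasBinaryProducts C] (P : EED.{u, v, w} C)

/-- Relational composition `∃_{p₂}(P_{⟨p₁,p₂⟩}(θ) ∧ P_{⟨p₂,p₃⟩}(ζ))`. -/
noncomputable def comp {A B D : C} (θ : P.obj (A ⨯ B)) (ζ : P.obj (B ⨯ D)) : P.obj (A ⨯ D) :=
  P.ex (prod.lift (prod.fst ≫ prod.fst) prod.snd)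
    (P.map prod.fst θ ⊓ P.map (prod.lift (prod.fst ≫ prod.snd) prod.snd) ζ)

/-- Opposite relation `P_{⟨p₂,p₁⟩}(θ)`. -/
noncomputable def op {A B : C} (θ : P.obj (A ⨯ B)) : P.obj (B ⨯ A) :=
  P.map (prod.lift prod.snd prod.fst) θ

/-- `ρ ≤ P_{⟨p₂,p₁⟩}(ρ)`. -/
def SymmRel {A : C} (ρ : P.obj (A ⨯ A)) : Prop :=
  ρ ≤ P.map (prod.lift prod.snd prod.fst) ρ

/-- `P_{⟨p₁,p₂⟩}(ρ) ∧ P_{⟨p₂,p₃⟩}(ρ) ≤ P_{⟨p₁,p₃⟩}(ρ)` in `P((A×A)×A)`. -/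
def TransRel {A : C} (ρ : P.obj (A ⨯ A)) : Prop :=
  P.map prod.fst ρ ⊓ P.map (prod.lift (prod.fst ≫ prod.snd) prod.snd) ρ ≤
    P.map (prod.lift (prod.fst ≫ prod.fst) prod.snd) ρ

/-- `δ_A ≤ ρ`. -/
def ReflRel {A : C} (ρ : P.obj (A ⨯ A)) : Prop := P.delta A ≤ ρ

/-- A `P`-equivalence relation. -/
def EqRel {A : C} (ρ : P.obj (A ⨯ A)) : Prop :=
  P.ReflRel ρ ∧ P.SymmRel ρ ∧ P.TransRel ρ

/-- Conditions (i)–(v) for an arrow `φ : ⟨A,ρ⟩ → ⟨B,σ⟩` of the exact completion `T_P`. -/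
def IsArrow {A B : C} (ρ : P.obj (A ⨯ A)) (σ : P.obj (B ⨯ B)) (φ : P.obj (A ⨯ B)) : Prop :=
  (φ ≤ P.map (prod.lift prod.fst prod.fst) ρ ⊓ P.map (prod.lift prod.snd prod.snd) σ) ∧
  (P.map prod.fst ρ ⊓ P.map (prod.lift (prod.fst ≫ prod.snd) prod.snd) φ ≤
      P.map (prod.lift (prod.fst ≫ prod.fst) prod.snd) φ) ∧
  (P.map prod.fst φ ⊓ P.map (prod.lift (prod.fst ≫ prod.snd) prod.snd) σ ≤
      P.map (prod.lift (prod.fst ≫ prod.fst) prod.snd) φ) ∧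
  (P.map prod.fst φ ⊓ P.map (prod.lift (prod.fst ≫ prod.fst) prod.snd) φ ≤
      P.map (prod.lift (prod.fst ≫ prod.snd) prod.snd) σ) ∧
  (P.map (diag A) ρ ≤ P.ex prod.fst φ)

/-- The graph relation `L[f] = ∃_{p₂}(P_{⟨p₁,p₂⟩}(ρ) ∧ P_{⟨f∘p₂,p₃⟩}(σ))` in `P(A×B)`. -/
noncomputable def Lrel {A B : C} (f : A ⟶ B) (ρ : P.obj (A ⨯ A)) (σ : P.obj (B ⨯ B)) : P.obj (A ⨯ B) :=
  P.ex (prod.lift (prod.fst ≫ prod.fst) prod.snd)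
    (P.map prod.fst ρ ⊓ P.map (prod.lift (prod.fst ≫ prod.snd ≫ f) prod.snd) σ)

end EED

/-!
Weak full comprehensions make `P` determined by generalized elements: `α ≤ β` holds as soon as
every `h : Z ⟶ X` with `P_h α = ⊤` also has `P_h β = ⊤` (test it on the comprehension of `α` and
use fullness). So the conditions on a functional relation `φ` can be read pointwise, as in
ordinary logic. Reflexivity of `ρ` and condition (v) make `φ` total, the rule of choice gives
`f : A ⟶ B` whose graph lies in `φ`, and then the pointwise conditions (ii)–(iv) show that `f`
preserves the relations and that `L[f] = φ`.
-/

namespace EED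

variable {C : Type u} [Category.{v} C] [HasBinaryProducts C] (P : EED.{u, v, w} C)

attribute [local simp] prod.lift_fst prod.lift_snd prod.lift_fst_assoc prod.lift_snd_assoc

def ElementsDetectLE : Prop :=
  ∀ {X : C} (α β : P.obj X), (∀ {Z : C} (h : Z ⟶ X), P.map h α = ⊤ → P.map h β = ⊤) → α ≤ β

@[simp]
theorem map_map {X Y Z : C} (g : Z ⟶ Y) (h : Y ⟶ X) (α : P.obj X) :
    P.map g (P.map h α) = P.map (g ≫ h) α :=
  (P.map_comp g h α).symm

variable {P}

theorem map_eq_top_of_le {X Z : C} (h : Z ⟶ X) {α β : P.obj X} (hαβ : α ≤ β)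
    (hα : P.map h α = ⊤) : P.map h β = ⊤ :=
  top_le_iff.mp (hα ▸ P.map_mono h hαβ)

theorem map_eq_top_of_inf_le {X Z : C} (h : Z ⟶ X) {α β γ : P.obj X} (hle : α ⊓ β ≤ γ)
    (hα : P.map h α = ⊤) (hβ : P.map h β = ⊤) : P.map h γ = ⊤ :=
  map_eq_top_of_le h hle (by rw [P.map_inf, hα, hβ, inf_top_eq])

theorem map_ex_eq_top {X Y Z : C} {e : Y ⟶ X} {h : Z ⟶ X} (g : Z ⟶ Y) (hg : g ≫ e = h)
    {α : P.obj Y} (hα : P.map g α = ⊤) : P.map h (P.ex e α) = ⊤ := by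
  rw [← hg, ← map_map]
  exact map_eq_top_of_le g ((P.ex_adj e α _).mp le_rfl) hα

theorem top_le_map_diag_delta (A : C) : (⊤ : P.obj A) ≤ P.map (diag A) (P.delta A) :=
  (P.elem_i ⊤ (P.delta A)).mp inf_le_right

theorem ReflRel.map_lift_self_eq_top {A Z : C} {ρ : P.obj (A ⨯ A)} (hρ : P.ReflRel ρ)
    (a : Z ⟶ A) : P.map (prod.lift a a) ρ = ⊤ := by
  have h := P.map_mono a ((top_le_map_diag_delta A).trans (P.map_mono _ hρ))
  rw [P.map_top, map_map, prod.comp_diag] at h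
  exact top_le_iff.mp h

theorem elementsDetectLE_of_weakFullComprehension (cob : ∀ {A : C}, P.obj A → C)
    (cm : ∀ {A : C} (α : P.obj A), cob α ⟶ A)
    (hc_top : ∀ {A : C} (α : P.obj A), P.map (cm α) α = ⊤)
    (hc_weak : ∀ {A : C} (α : P.obj A) {Z : C} (f : Z ⟶ A),
      P.map f α = ⊤ → ∃ g : Z ⟶ cob α, g ≫ cm α = f)
    (hc_full : ∀ {A : C} (α β : P.obj A) (k : cob α ⟶ cob β), k ≫ cm β = cm α → α ≤ β) :
    P.ElementsDetectLE := by
  intro X α β H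
  obtain ⟨k, hk⟩ := hc_weak β (cm α) (H _ (hc_top α))
  exact hc_full α β k hk

theorem ElementsDetectLE.le_of_forall_lift (hP : P.ElementsDetectLE) {X Y : C}
    {α β : P.obj (X ⨯ Y)}
    (H : ∀ {Z : C} (x : Z ⟶ X) (y : Z ⟶ Y), P.map (prod.lift x y) α = ⊤ →
      P.map (prod.lift x y) β = ⊤) : α ≤ β := by
  refine hP α β fun h hα => ?_
  have h_eta : prod.lift (h ≫ prod.fst) (h ≫ prod.snd) = h := prod.hom_ext (by simp) (by simp)
  rw [← h_eta] at hα ⊢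
  exact H _ _ hα

section IsArrow

variable {A B : C} {ρ : P.obj (A ⨯ A)} {σ : P.obj (B ⨯ B)} {φ : P.obj (A ⨯ B)}

theorem IsArrow.top_le_ex_fst (hφ : P.IsArrow ρ σ φ) (hρ : P.ReflRel ρ) :
    (⊤ : P.obj A) ≤ P.ex prod.fst φ :=
  ((top_le_map_diag_delta A).trans (P.map_mono _ hρ)).trans hφ.2.2.2.2

variable {Z : C}

theorem IsArrow.map_lift_of_rel_left (hφ : P.IsArrow ρ σ φ) {a a' : Z ⟶ A} {b : Z ⟶ B}
    (haa' : P.map (prod.lift a a') ρ = ⊤) (ha'b : P.map (prod.lift a' b) φ = ⊤) :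
    P.map (prod.lift a b) φ = ⊤ := by
  simpa using map_eq_top_of_inf_le (prod.lift (prod.lift a a') b) hφ.2.1
    (by simpa using haa') (by simpa using ha'b)

theorem IsArrow.map_lift_of_rel_right (hφ : P.IsArrow ρ σ φ) {a : Z ⟶ A} {b b' : Z ⟶ B}
    (hab : P.map (prod.lift a b) φ = ⊤) (hbb' : P.map (prod.lift b b') σ = ⊤) :
    P.map (prod.lift a b') φ = ⊤ := by
  simpa using map_eq_top_of_inf_le (prod.lift (prod.lift a b) b') hφ.2.2.1
    (by simpa using hab) (by simpa using hbb')

theorem IsArrow.map_lift_rel_of_map_lift (hφ : P.IsArrow ρ σ φ) {a : Z ⟶ A} {b b' : Z ⟶ B}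
    (hab : P.map (prod.lift a b) φ = ⊤) (hab' : P.map (prod.lift a b') φ = ⊤) :
    P.map (prod.lift b b') σ = ⊤ := by
  simpa using map_eq_top_of_inf_le (prod.lift (prod.lift a b) b') hφ.2.2.2.1
    (by simpa using hab) (by simpa using hab')

end IsArrow

section Graph

variable {A B : C} {f : A ⟶ B} {ρ : P.obj (A ⨯ A)} {σ : P.obj (B ⨯ B)} {φ : P.obj (A ⨯ B)}

theorem map_lift_comp_eq_top (hf : (⊤ : P.obj A) ≤ P.map (prod.lift (𝟙 A) f) φ)
    {Z : C} (a : Z ⟶ A) : P.map (prod.lift a (a ≫ f)) φ = ⊤ := by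
  have h := P.map_mono a hf
  rw [P.map_top, map_map, prod.comp_lift, Category.comp_id] at h
  exact top_le_iff.mp h

variable (hP : P.ElementsDetectLE) (hφ : P.IsArrow ρ σ φ)
  (hf : (⊤ : P.obj A) ≤ P.map (prod.lift (𝟙 A) f) φ)
include hP hφ hf

theorem IsArrow.le_map_prod_map : ρ ≤ P.map (prod.map f f) σ :=
  hP.le_of_forall_lift fun a a' haa' => by
    simpa using hφ.map_lift_rel_of_map_lift (map_lift_comp_eq_top hf a)
      (hφ.map_lift_of_rel_left haa' (map_lift_comp_eq_top hf a'))

theorem IsArrow.Lrel_le : P.Lrel f ρ σ ≤ φ := by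
  refine (P.ex_adj _ _ _).mpr (hP.le_of_forall_lift fun x b hxb => ?_)
  obtain ⟨a, a', rfl⟩ : ∃ a a' : _ ⟶ A, x = prod.lift a a' :=
    ⟨x ≫ prod.fst, x ≫ prod.snd, prod.hom_ext (by simp) (by simp)⟩
  rw [P.map_inf, inf_eq_top_iff] at hxb
  simp only [map_map, prod.comp_lift, prod.lift_fst, prod.lift_snd, prod.lift_fst_assoc,
    prod.lift_snd_assoc] at hxb ⊢
  exact hφ.map_lift_of_rel_right (hφ.map_lift_of_rel_left hxb.1 (map_lift_comp_eq_top hf a'))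
    hxb.2

theorem IsArrow.le_Lrel (hρ : P.ReflRel ρ) : φ ≤ P.Lrel f ρ σ :=
  hP.le_of_forall_lift fun a b hab =>
    map_ex_eq_top (prod.lift (prod.lift a a) b) (by simp) <| by
      rw [P.map_inf, inf_eq_top_iff]
      simp only [map_map, prod.comp_lift, prod.lift_fst, prod.lift_snd, prod.lift_fst_assoc,
        prod.lift_snd_assoc]
      exact ⟨hρ.map_lift_self_eq_top a,
        hφ.map_lift_rel_of_map_lift (map_lift_comp_eq_top hf a) hab⟩

end Graph

end EED

theorem L_full_of_choice_general
    {C : Type u} [Category.{v} C] [HasBinaryProducts C] (P : EED.{u, v, w} C)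
    (cob : ∀ {A : C}, P.obj A → C) (cm : ∀ {A : C} (α : P.obj A), cob α ⟶ A)
    (hc_top : ∀ {A : C} (α : P.obj A), P.map (cm α) α = ⊤)
    (hc_weak : ∀ {A : C} (α : P.obj A) {Z : C} (f : Z ⟶ A),
      P.map f α = ⊤ → ∃ g : Z ⟶ cob α, g ≫ cm α = f)
    (hc_full : ∀ {A : C} (α β : P.obj A) (k : cob α ⟶ cob β),
      k ≫ cm β = cm α → α ≤ β)
    (choice : ∀ {A B : C} (α : P.obj (A ⨯ B)),
      (⊤ : P.obj A) ≤ P.ex prod.fst α →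
      ∃ w : A ⟶ B, (⊤ : P.obj A) ≤ P.map (prod.lift (𝟙 A) w) α)
    {A B : C} (ρ : P.obj (A ⨯ A)) (σ : P.obj (B ⨯ B))
    (hρ : P.EqRel ρ)
    (φ : P.obj (A ⨯ B)) (hφ : P.IsArrow ρ σ φ) :
    ∃ f : A ⟶ B, ρ ≤ P.map (prod.map f f) σ ∧ P.Lrel f ρ σ = φ := by
  have hP : P.ElementsDetectLE :=
    EED.elementsDetectLE_of_weakFullComprehension cob cm hc_top hc_weak hc_full
  obtain ⟨f, hf⟩ := choice φ (hφ.top_le_ex_fst hρ.1)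
  exact ⟨f, hφ.le_map_prod_map hP hf, le_antisymm (hφ.Lrel_le hP hf) (hφ.le_Lrel hP hf hρ.1)⟩

/-- if `P` has weak full comprehensions and satisfies the rule
of choice (every total relation contains the graph of a map), then the
canonical functor `L : Q_P → E_P` is full. -/
theorem L_full_of_choice
    {C : Type u} [Category.{v} C] [HasBinaryProducts C] (P : EED.{u, v, w} C)
    (cob : ∀ {A : C}, P.obj A → C) (cm : ∀ {A : C} (α : P.obj A), cob α ⟶ A)
    (hc_top : ∀ {A : C} (α : P.obj A), P.map (cm α) α = ⊤)
    (hc_weak : ∀ {A : C} (α : P.obj A) {Z : C} (f : Z ⟶ A),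
      P.map f α = ⊤ → ∃ g : Z ⟶ cob α, g ≫ cm α = f)
    (hc_full : ∀ {A : C} (α β : P.obj A) (k : cob α ⟶ cob β),
      k ≫ cm β = cm α → α ≤ β)
    (choice : ∀ {A B : C} (α : P.obj (A ⨯ B)),
      (⊤ : P.obj A) ≤ P.ex prod.fst α →
      ∃ w : A ⟶ B, (⊤ : P.obj A) ≤ P.map (prod.lift (𝟙 A) w) α)
    {A B : C} (ρ : P.obj (A ⨯ A)) (σ : P.obj (B ⨯ B))
    (hρ : P.EqRel ρ) (hσ : P.EqRel σ)
    (φ : P.obj (A ⨯ B)) (hφ : P.IsArrow ρ σ φ) :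
    ∃ f : A ⟶ B, ρ ≤ P.map (prod.map f f) σ ∧ P.Lrel f ρ σ = φ :=
  L_full_of_choice_general P cob cm hc_top hc_weak hc_full choice ρ σ hρ φ hφ
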